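/- Let a, b, c, m, μ be nonzero complex numbers and W(z, χ, φ₁, φ₂, φ₃) = μ²z + (m/2)χ² + a z χ φ₁ + b z φ₂φ₃ + c φ₁²φ₂. Then the set of common zeros of all five partial derivatives of W is nonempty and equals {(0, 0, 0, φ₂, φ₃) : φ₂φ₃ = -μ²/b}. -/

import Mathlib

/-!
Each partial derivative of `W` is a polynomial of degree at most two in its own variable, so the
critical points are the solutions of five polynomial equations. If `z ≠ 0`, then `∂W/∂φ₃ = b z φ₂`
forces `φ₂ = 0`, then `∂W/∂φ₁` forces `a χ = 0`, and `∂W/∂z` collapses to `μ² = 0`. Hence `z = 0`,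
after which `∂W/∂χ = m χ` and `∂W/∂φ₂ = c φ₁²` kill `χ` and `φ₁`, and `∂W/∂z = μ² + b φ₂ φ₃`
leaves the stated quadric.
-/

/-- A critical point of a function of five complex variables. -/
def IsCrit5 (W : ℂ → ℂ → ℂ → ℂ → ℂ → ℂ) (z χ φ1 φ2 φ3 : ℂ) : Prop :=
  deriv (fun t => W t χ φ1 φ2 φ3) z = 0 ∧
  deriv (fun t => W z t φ1 φ2 φ3) χ = 0 ∧
  deriv (fun t => W z χ t φ2 φ3) φ1 = 0 ∧
  deriv (fun t => W z χ φ1 t φ3) φ2 = 0 ∧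
  deriv (fun t => W z χ φ1 φ2 t) φ3 = 0

theorem deriv_eq_of_forall_eq_quadratic {𝕜 : Type*} [NontriviallyNormedField 𝕜] {f : 𝕜 → 𝕜}
    {x d : 𝕜} (p q : 𝕜) (hf : ∀ t, f t = p * t ^ 2 + q * t + f 0) (hd : 2 * p * x + q = d) :
    deriv f x = d := by
  have hderiv : HasDerivAt (fun t => p * t ^ 2 + q * t + f 0) (p * (2 * x) + q) x := by
    simpa using (((hasDerivAt_pow 2 x).const_mul p).add ((hasDerivAt_id x).const_mul q)).add_const
      (f 0)
  rw [funext hf, hderiv.deriv, ← hd]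
  ring

theorem isCrit5_iff_of_eq {a b c m μ : ℂ} {W : ℂ → ℂ → ℂ → ℂ → ℂ → ℂ}
    (hW : ∀ z χ φ1 φ2 φ3, W z χ φ1 φ2 φ3 =
      μ^2 * z + (m / 2) * χ^2 + a * z * χ * φ1 + b * z * φ2 * φ3 + c * φ1^2 * φ2)
    (z χ φ1 φ2 φ3 : ℂ) :
    IsCrit5 W z χ φ1 φ2 φ3 ↔
      μ ^ 2 + a * χ * φ1 + b * φ2 * φ3 = 0 ∧ m * χ + a * z * φ1 = 0 ∧
        2 * c * φ1 * φ2 + a * z * χ = 0 ∧ b * z * φ3 + c * φ1 ^ 2 = 0 ∧ b * z * φ2 = 0 := by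
  have hz : deriv (fun t => W t χ φ1 φ2 φ3) z = μ ^ 2 + a * χ * φ1 + b * φ2 * φ3 :=
    deriv_eq_of_forall_eq_quadratic 0 (μ ^ 2 + a * χ * φ1 + b * φ2 * φ3)
      (fun t => by rw [hW, hW]; ring) (by ring)
  have hχ : deriv (fun t => W z t φ1 φ2 φ3) χ = m * χ + a * z * φ1 :=
    deriv_eq_of_forall_eq_quadratic (m / 2) (a * z * φ1) (fun t => by rw [hW, hW]; ring) (by ring)
  have hφ1 : deriv (fun t => W z χ t φ2 φ3) φ1 = 2 * c * φ1 * φ2 + a * z * χ :=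
    deriv_eq_of_forall_eq_quadratic (c * φ2) (a * z * χ) (fun t => by rw [hW, hW]; ring) (by ring)
  have hφ2 : deriv (fun t => W z χ φ1 t φ3) φ2 = b * z * φ3 + c * φ1 ^ 2 :=
    deriv_eq_of_forall_eq_quadratic 0 (b * z * φ3 + c * φ1 ^ 2) (fun t => by rw [hW, hW]; ring)
      (by ring)
  have hφ3 : deriv (fun t => W z χ φ1 φ2 t) φ3 = b * z * φ2 :=
    deriv_eq_of_forall_eq_quadratic 0 (b * z * φ2) (fun t => by rw [hW, hW]; ring) (by ring)
  rw [IsCrit5, hz, hχ, hφ1, hφ2, hφ3]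

theorem massive_critical_equations_iff {K : Type*} [Field K] {a b c m μ z χ φ1 φ2 φ3 : K}
    (hb : b ≠ 0) (hc : c ≠ 0) (hm : m ≠ 0) (hμ : μ ≠ 0) :
    (μ ^ 2 + a * χ * φ1 + b * φ2 * φ3 = 0 ∧ m * χ + a * z * φ1 = 0 ∧
        2 * c * φ1 * φ2 + a * z * χ = 0 ∧ b * z * φ3 + c * φ1 ^ 2 = 0 ∧ b * z * φ2 = 0) ↔
      z = 0 ∧ χ = 0 ∧ φ1 = 0 ∧ φ2 * φ3 = -μ ^ 2 / b := by
  constructor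
  · rintro ⟨h1, h2, h3, h4, h5⟩
    have hz : z = 0 := by
      by_contra hz
      have hφ2 : φ2 = 0 := by simpa [hb, hz] using h5
      have haχ : a * χ = 0 := by simpa [hφ2, hz] using h3
      exact hμ (pow_eq_zero_iff two_ne_zero |>.1 (by linear_combination h1 - φ1 * haχ - b * φ3 * hφ2))
    subst hz
    have hχ : χ = 0 := by simpa [hm] using h2
    have hφ1 : φ1 = 0 := by simpa [hc] using h4
    subst hχ hφ1
    refine ⟨rfl, rfl, rfl, ?_⟩
    rw [eq_div_iff hb]
    linear_combination h1
  · rintro ⟨rfl, rfl, rfl, h⟩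
    rw [eq_div_iff hb] at h
    exact ⟨by linear_combination h, by ring, by ring, by ring, by ring⟩

theorem stmt5_general (a b c m μ : ℂ) (hb : b ≠ 0) (hc : c ≠ 0)
    (hm : m ≠ 0) (hμ : μ ≠ 0)
    (W : ℂ → ℂ → ℂ → ℂ → ℂ → ℂ)
    (hW : ∀ z χ φ1 φ2 φ3, W z χ φ1 φ2 φ3 =
      μ^2 * z + (m / 2) * χ^2 + a * z * χ * φ1 + b * z * φ2 * φ3 + c * φ1^2 * φ2) :
    (∃ z χ φ1 φ2 φ3 : ℂ, IsCrit5 W z χ φ1 φ2 φ3) ∧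
    (∀ z χ φ1 φ2 φ3 : ℂ, IsCrit5 W z χ φ1 φ2 φ3 ↔
      (z = 0 ∧ χ = 0 ∧ φ1 = 0 ∧ φ2 * φ3 = -μ^2 / b)) := by
  have hcrit : ∀ z χ φ1 φ2 φ3 : ℂ, IsCrit5 W z χ φ1 φ2 φ3 ↔
      (z = 0 ∧ χ = 0 ∧ φ1 = 0 ∧ φ2 * φ3 = -μ^2 / b) := fun z χ φ1 φ2 φ3 =>
    (isCrit5_iff_of_eq hW z χ φ1 φ2 φ3).trans (massive_critical_equations_iff hb hc hm hμ)
  exact ⟨⟨0, 0, 0, 1, -μ ^ 2 / b, (hcrit _ _ _ _ _).2 ⟨rfl, rfl, rfl, one_mul _⟩⟩, hcrit⟩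

theorem stmt5 (a b c m μ : ℂ) (ha : a ≠ 0) (hb : b ≠ 0) (hc : c ≠ 0)
    (hm : m ≠ 0) (hμ : μ ≠ 0)
    (W : ℂ → ℂ → ℂ → ℂ → ℂ → ℂ)
    (hW : ∀ z χ φ1 φ2 φ3, W z χ φ1 φ2 φ3 =
      μ^2 * z + (m / 2) * χ^2 + a * z * χ * φ1 + b * z * φ2 * φ3 + c * φ1^2 * φ2) :
    (∃ z χ φ1 φ2 φ3 : ℂ, IsCrit5 W z χ φ1 φ2 φ3) ∧
    (∀ z χ φ1 φ2 φ3 : ℂ, IsCrit5 W z χ φ1 φ2 φ3 ↔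
      (z = 0 ∧ χ = 0 ∧ φ1 = 0 ∧ φ2 * φ3 = -μ^2 / b)) :=
  stmt5_general a b c m μ hb hc hm hμ W hW
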